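/- arXiv:1507.06291 — 3 statements merged into one kernel-verified Lean document; each statement's English description precedes it below -/
import Mathlib

section
/- For every θ ∈ (-π/2, π/2), every real β ≥ 1 and each choice of sign ±, the complex number α± := -iβ sin θ ± √(β²-1) cos θ satisfies (α±² + 1)^{1/2} = β cos θ ∓ i sin θ √(β²-1) (principal square root), and consequently (α±² + 1)^{1/2} cos θ + i α± sin θ = β. -/
open Complex Real

noncomputable def alphaP (β θ : ℝ) : ℂ :=
  -Complex.I * β * Real.sin θ + Real.sqrt (β ^ 2 - 1) * Real.cos θ

noncomputable def alphaM (β θ : ℝ) : ℂ :=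
  -Complex.I * β * Real.sin θ - Real.sqrt (β ^ 2 - 1) * Real.cos θ

lemma sqrt_half_eq {z w : ℂ} (hw : 0 < w.re) (h : z = w ^ 2) : z ^ (1 / 2 : ℂ) = w := by
  rw [h, one_div, Complex.sq_cpow_two_inv hw]

/-- For θ ∈ (-π/2, π/2), β ≥ 1 and each sign ±, the number
α± = -iβ sin θ ± √(β²-1) cos θ satisfies
(α±² + 1)^{1/2} = β cos θ ∓ i sin θ √(β²-1) (principal square root), and hence
(α±² + 1)^{1/2} cos θ + i α± sin θ = β. -/
theorem stmt_0 (θ β : ℝ) (hθ : θ ∈ Set.Ioo (-(Real.pi / 2)) (Real.pi / 2))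
    (hβ : 1 ≤ β) :
    (((alphaP β θ) ^ 2 + 1) ^ (1 / 2 : ℂ)
        = (β : ℂ) * Real.cos θ - Complex.I * Real.sin θ * Real.sqrt (β ^ 2 - 1) ∧
      ((alphaP β θ) ^ 2 + 1) ^ (1 / 2 : ℂ) * Real.cos θ
        + Complex.I * alphaP β θ * Real.sin θ = (β : ℂ)) ∧
    (((alphaM β θ) ^ 2 + 1) ^ (1 / 2 : ℂ)
        = (β : ℂ) * Real.cos θ + Complex.I * Real.sin θ * Real.sqrt (β ^ 2 - 1) ∧
      ((alphaM β θ) ^ 2 + 1) ^ (1 / 2 : ℂ) * Real.cos θ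
        + Complex.I * alphaM β θ * Real.sin θ = (β : ℂ)) := by
  have hc : 0 < Real.cos θ := Real.cos_pos_of_mem_Ioo hθ
  have hβ0 : (0:ℝ) < β := lt_of_lt_of_le one_pos hβ
  have hβ1 : (0:ℝ) ≤ β ^ 2 - 1 := by nlinarith
  have hr : ((Real.sqrt (β ^ 2 - 1) : ℝ) : ℂ) ^ 2 = (β : ℂ) ^ 2 - 1 := by
    rw [← Complex.ofReal_pow, Real.sq_sqrt hβ1]; push_cast; ring
  have hsc : ((Real.sin θ : ℝ) : ℂ) ^ 2 = 1 - ((Real.cos θ : ℝ) : ℂ) ^ 2 := by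
    rw [← Complex.ofReal_pow, ← Complex.ofReal_pow]
    norm_cast
    have := Real.sin_sq_add_cos_sq θ
    linarith
  have hreP : (0:ℝ) < ((β : ℂ) * Real.cos θ - Complex.I * Real.sin θ * Real.sqrt (β ^ 2 - 1)).re := by
    simp [Complex.sub_re, Complex.mul_re]
    positivity
  have hreM : (0:ℝ) < ((β : ℂ) * Real.cos θ + Complex.I * Real.sin θ * Real.sqrt (β ^ 2 - 1)).re := by
    simp [Complex.add_re, Complex.mul_re]
    positivity
  have hP : ((alphaP β θ) ^ 2 + 1) ^ (1 / 2 : ℂ)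
      = (β : ℂ) * Real.cos θ - Complex.I * Real.sin θ * Real.sqrt (β ^ 2 - 1) := by
    apply sqrt_half_eq hreP
    unfold alphaP
    linear_combination ((β:ℂ)^2 * (Real.sin θ:ℂ)^2 - (Real.sin θ:ℂ)^2 * (Real.sqrt (β^2-1):ℂ)^2) * Complex.I_sq
      + ((Real.sin θ:ℂ)^2 + (Real.cos θ:ℂ)^2) * hr - hsc
  have hM : ((alphaM β θ) ^ 2 + 1) ^ (1 / 2 : ℂ)
      = (β : ℂ) * Real.cos θ + Complex.I * Real.sin θ * Real.sqrt (β ^ 2 - 1) := by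
    apply sqrt_half_eq hreM
    unfold alphaM
    linear_combination ((β:ℂ)^2 * (Real.sin θ:ℂ)^2 - (Real.sin θ:ℂ)^2 * (Real.sqrt (β^2-1):ℂ)^2) * Complex.I_sq
      + ((Real.sin θ:ℂ)^2 + (Real.cos θ:ℂ)^2) * hr - hsc
  refine ⟨⟨hP, ?_⟩, hM, ?_⟩
  · rw [hP]; unfold alphaP; linear_combination (-(β:ℂ) * (Real.sin θ:ℂ)^2) * Complex.I_sq + (β:ℂ) * hsc
  · rw [hM]; unfold alphaM; linear_combination (-(β:ℂ) * (Real.sin θ:ℂ)^2) * Complex.I_sq + (β:ℂ) * hsc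
end

section
/- For every θ ∈ (-π/2, π/2) and every real β > 1, with α± := -iβ sin θ ± √(β²-1) cos θ, one has sqrt↑(α₊ - i) · sqrt↑(α₋ - i) = -i(β + sin θ). -/
open Complex Real

/-- Square root with branch cut along the positive imaginary axis:
sqrt↑(w) := e^{-iπ/4} (i w)^{1/2}, principal branch inside. -/
noncomputable def sqrtUp (w : ℂ) : ℂ :=
  Complex.exp (-Complex.I * Real.pi / 4) * (Complex.I * w) ^ (1 / 2 : ℂ)

/-!
Write `u = α₊ - i`. Then `α₋ - i = -conj u`, so `i(α₋ - i) = conj (i u)`. Away from the cut of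
the principal root, `(conj z)^{1/2} = conj (z^{1/2})`, hence the product of the two principal roots
is `|z^{1/2}|² = |u|`, and the prefactors contribute `e^{-iπ/2} = -i`. Finally
`|u|² = (β²-1) cos² θ + (β sin θ + 1)² = (β + sin θ)²`.
-/

open ComplexConjugate

namespace Complex

lemma cpow_half_mul_conj_cpow_half {z : ℂ} (hz : z.arg ≠ π) :
    z ^ (1 / 2 : ℂ) * (conj z) ^ (1 / 2 : ℂ) = ‖z‖ := by
  have hsq : ‖z ^ (1 / 2 : ℂ)‖ ^ 2 = ‖z‖ := by
    rw [← norm_pow, one_div, cpow_ofNat_inv_pow]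
  rw [conj_cpow z _ hz, map_div₀, map_one, map_ofNat, mul_conj, normSq_eq_norm_sq, hsq]

lemma exp_neg_I_mul_pi_div_four_mul_self :
    exp (-I * π / 4) * exp (-I * π / 4) = -I := by
  rw [← exp_add, show -I * π / 4 + -I * π / 4 = -π / 2 * I by ring, exp_neg_pi_div_two_mul_I]

end Complex

lemma sqrtUp_mul_sqrtUp_neg_conj {u : ℂ} (hu : u.re ≠ 0) :
    sqrtUp u * sqrtUp (-conj u) = -I * ‖u‖ := by
  have hcut : (I * u).arg ≠ π := fun h ↦ hu (by simpa using (arg_eq_pi_iff.mp h).2)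
  have hconj : I * -conj u = conj (I * u) := by simp
  calc sqrtUp u * sqrtUp (-conj u)
      = (exp (-I * π / 4) * exp (-I * π / 4)) *
          ((I * u) ^ (1 / 2 : ℂ) * (conj (I * u)) ^ (1 / 2 : ℂ)) := by
        rw [sqrtUp, sqrtUp, hconj]; ring
    _ = -I * ‖u‖ := by
        rw [exp_neg_I_mul_pi_div_four_mul_self, cpow_half_mul_conj_cpow_half hcut, norm_mul,
          norm_I, one_mul]

lemma alphaM_sub_I (β θ : ℝ) : alphaM β θ - I = -conj (alphaP β θ - I) := by
  simp only [alphaM, alphaP, map_sub, map_add, map_mul, map_neg, conj_I, conj_ofReal]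
  ring

lemma re_alphaP_sub_I (β θ : ℝ) : (alphaP β θ - I).re = √(β ^ 2 - 1) * Real.cos θ := by
  simp [alphaP, cos_ofReal_re]

lemma norm_alphaP_sub_I {β : ℝ} (hβ : 1 ≤ β) (θ : ℝ) : ‖alphaP β θ - I‖ = β + Real.sin θ := by
  have hre := re_alphaP_sub_I β θ
  have him : (alphaP β θ - I).im = -(β * Real.sin θ + 1) := by
    simp [alphaP, sin_ofReal_re]
    ring
  have hnormSq : normSq (alphaP β θ - I) = (β + Real.sin θ) ^ 2 := by
    rw [normSq_apply, hre, him]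
    nlinarith [Real.sq_sqrt (by nlinarith : (0 : ℝ) ≤ β ^ 2 - 1), Real.sin_sq_add_cos_sq θ]
  rw [norm_def, hnormSq, Real.sqrt_sq (by linarith [Real.neg_one_le_sin θ])]

/-- For θ ∈ (-π/2, π/2) and β > 1, with α± = -iβ sin θ ± √(β²-1) cos θ,
one has sqrt↑(α₊ - i) · sqrt↑(α₋ - i) = -i(β + sin θ). -/
theorem stmt_2 (θ β : ℝ) (hθ : θ ∈ Set.Ioo (-(Real.pi / 2)) (Real.pi / 2))
    (hβ : 1 < β) :
    sqrtUp (alphaP β θ - Complex.I) * sqrtUp (alphaM β θ - Complex.I)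
      = -Complex.I * ((β : ℂ) + (Real.sin θ : ℂ)) := by
  have hre : (alphaP β θ - I).re ≠ 0 := by
    rw [re_alphaP_sub_I]
    exact (mul_pos (Real.sqrt_pos.mpr (by nlinarith)) (Real.cos_pos_of_mem_Ioo hθ)).ne'
  rw [alphaM_sub_I, sqrtUp_mul_sqrtUp_neg_conj hre, norm_alphaP_sub_I hβ.le]
  push_cast
  ring
end

section
/- For every θ ∈ (-π/2, π/2) and every real β > 1, one has e^{-iπ/4} · ℱ(β,θ) = -i√2 · 𝒢(β,θ); in particular, since 𝒢(β,θ) is real, the complex number e^{-iπ/4} ℱ(β,θ) is purely imaginary. -/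
open Complex Real

/-- ℱ(β,θ) := (-i sin θ + β cos θ (β²-1)^{-1/2}) / (α₊ sqrt↑(α₊ - i))
            - (-i sin θ - β cos θ (β²-1)^{-1/2}) / (α₋ sqrt↑(α₋ - i)). -/
noncomputable def calF (β θ : ℝ) : ℂ :=
  (-Complex.I * Real.sin θ + (β : ℂ) * Real.cos θ * ((Real.sqrt (β ^ 2 - 1) : ℂ))⁻¹)
      / (alphaP β θ * sqrtUp (alphaP β θ - Complex.I))
    - (-Complex.I * Real.sin θ - (β : ℂ) * Real.cos θ * ((Real.sqrt (β ^ 2 - 1) : ℂ))⁻¹)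
      / (alphaM β θ * sqrtUp (alphaM β θ - Complex.I))

/-- ψ₊ := arg(α₊ - i), principal argument. -/
noncomputable def psiP (β θ : ℝ) : ℝ := (alphaP β θ - Complex.I).arg

/-- The real-valued function 𝒢(β,θ). -/
noncomputable def calG (β θ : ℝ) : ℝ :=
  (β * (Real.cos (psiP β θ / 2) + Real.sin (psiP β θ / 2))
      - Real.cos θ * Real.sin θ * (Real.sqrt (β ^ 2 - 1))⁻¹
        * (Real.cos (psiP β θ / 2) - Real.sin (psiP β θ / 2)))
    / ((β ^ 2 - Real.cos θ ^ 2) * Real.sqrt (β + Real.sin θ))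

/-!
Put `A = i(α₊ - i) = (β sin θ + 1) + i √(β²-1) cos θ`. Since `α₋ = -conj α₊`, also
`i(α₋ - i) = conj A`, and `A` lies in the open upper half-plane, away from the branch cut of the
principal square root; so `sqrt↑(α₊ - i) = e^{-iπ/4} A^{1/2}` and
`sqrt↑(α₋ - i) = e^{-iπ/4} conj (A^{1/2})`. Hence `e^{-iπ/4}` times the second term of `ℱ` is the
conjugate of `W`, `e^{-iπ/4}` times the first, and `e^{-iπ/4} ℱ = W - conj W = 2i Im W`.
Finally `|α₊|² = β² - cos²θ`, `|A| = β + sin θ` and `A^{1/2} = √|A| e^{iφ/2}` with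
`φ = arg A = ψ₊ + π/2` make `Im W` explicit, and it equals `-𝒢/√2`.
-/

open ComplexConjugate

lemma cpow_one_half_eq_polar (z : ℂ) :
    z ^ (1 / 2 : ℂ) = √‖z‖ * (Real.cos (arg z / 2) + Real.sin (arg z / 2) * I) := by
  have hhalf : (1 / 2 : ℂ) = ((1 / 2 : ℝ) : ℂ) := by push_cast; rfl
  apply Complex.ext
  · rw [hhalf, cpow_ofReal_re, ← Real.sqrt_eq_rpow]
    simp [div_eq_mul_inv, -ofReal_cos, -ofReal_sin]
  · rw [hhalf, cpow_ofReal_im, ← Real.sqrt_eq_rpow]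
    simp [div_eq_mul_inv, -ofReal_cos, -ofReal_sin]

lemma cos_add_sin_sub_pi_div_four (x : ℝ) :
    Real.cos (x - π / 4) + Real.sin (x - π / 4) = √2 * Real.sin x := by
  rw [Real.cos_sub, Real.sin_sub, Real.cos_pi_div_four, Real.sin_pi_div_four]
  ring

lemma cos_sub_sin_sub_pi_div_four (x : ℝ) :
    Real.cos (x - π / 4) - Real.sin (x - π / 4) = √2 * Real.cos x := by
  rw [Real.cos_sub, Real.sin_sub, Real.cos_pi_div_four, Real.sin_pi_div_four]
  ring

lemma mul_div_mul_mul_cancel₀ {K : Type*} [Field K] {e : K} (he : e ≠ 0) (a b c : K) :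
    e * (a / (b * (e * c))) = a / (b * c) := by
  rw [mul_left_comm, mul_div_assoc', mul_div_mul_left _ _ he]

lemma arg_neg_I_mul_of_im_pos {z : ℂ} (hz : 0 < z.im) : arg (-I * z) = arg z - π / 2 := by
  have hz0 : z ≠ 0 := fun h => by simp [h] at hz
  have h0 : 0 ≤ arg z := arg_nonneg_iff.2 hz.le
  rw [(arg_mul_eq_add_arg_iff (by simp) hz0).2, arg_neg_I]
  · ring
  · rw [arg_neg_I]
    constructor <;> linarith [arg_le_pi z, Real.pi_pos]

section Alpha

variable (β θ : ℝ)

noncomputable def phiP : ℝ := (I * (alphaP β θ - I)).arg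

noncomputable def numP : ℂ :=
  -I * Real.sin θ + (β : ℂ) * Real.cos θ * ((√(β ^ 2 - 1) : ℝ) : ℂ)⁻¹

/-- `e^{-iπ/4}` times the first term of `calF`. -/
noncomputable def termP : ℂ := numP β θ / (alphaP β θ * (I * (alphaP β θ - I)) ^ (1 / 2 : ℂ))

@[simp] lemma alphaP_re : (alphaP β θ).re = √(β ^ 2 - 1) * Real.cos θ := by
  simp [alphaP, cos_ofReal_re]

@[simp] lemma alphaP_im : (alphaP β θ).im = -(β * Real.sin θ) := by
  simp [alphaP, sin_ofReal_re]

@[simp] lemma numP_re : (numP β θ).re = β * Real.cos θ / √(β ^ 2 - 1) := by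
  rw [numP, ← ofReal_inv]
  simp [-ofReal_inv, cos_ofReal_re, div_eq_mul_inv]

@[simp] lemma numP_im : (numP β θ).im = -Real.sin θ := by simp [numP, sin_ofReal_re]

lemma alphaM_eq_neg_conj_alphaP : alphaM β θ = -conj (alphaP β θ) := by
  apply Complex.ext <;> simp [alphaM, cos_ofReal_re, sin_ofReal_re]

lemma I_mul_alphaP_sub_I :
    I * (alphaP β θ - I) = (β * Real.sin θ + 1 : ℝ) + (√(β ^ 2 - 1) * Real.cos θ : ℝ) * I := by
  simp only [alphaP]
  push_cast
  linear_combination (-(β : ℂ) * Complex.sin θ - 1) * I_sq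

lemma I_mul_alphaM_sub_I : I * (alphaM β θ - I) = conj (I * (alphaP β θ - I)) := by
  apply Complex.ext <;> simp [alphaM_eq_neg_conj_alphaP, add_comm]

variable {β}

lemma normSq_alphaP (hβ : 1 ≤ β) : normSq (alphaP β θ) = β ^ 2 - Real.cos θ ^ 2 := by
  have hs : √(β ^ 2 - 1) ^ 2 = β ^ 2 - 1 := Real.sq_sqrt (by nlinarith)
  rw [normSq_apply, alphaP_re, alphaP_im]
  linear_combination (Real.cos θ ^ 2) * hs + β ^ 2 * Real.sin_sq_add_cos_sq θ

lemma norm_I_mul_alphaP_sub_I (hβ : 1 ≤ β) : ‖I * (alphaP β θ - I)‖ = β + Real.sin θ := by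
  have hs : √(β ^ 2 - 1) ^ 2 = β ^ 2 - 1 := Real.sq_sqrt (by nlinarith)
  rw [I_mul_alphaP_sub_I, norm_add_mul_I]
  rw [show (β * Real.sin θ + 1) ^ 2 + (√(β ^ 2 - 1) * Real.cos θ) ^ 2 = (β + Real.sin θ) ^ 2 by
    linear_combination (Real.cos θ ^ 2) * hs + (β ^ 2 - 1) * Real.sin_sq_add_cos_sq θ]
  exact Real.sqrt_sq (by linarith [Real.neg_one_le_sin θ])

lemma numP_mul_conj_alphaP (hβ : 1 < β) :
    numP β θ * conj (alphaP β θ)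
      = β + (Real.sin θ * Real.cos θ / √(β ^ 2 - 1) : ℝ) * I := by
  have hs0 : √(β ^ 2 - 1) ≠ 0 := (Real.sqrt_pos.2 (by nlinarith)).ne'
  have hs : √(β ^ 2 - 1) ^ 2 = β ^ 2 - 1 := Real.sq_sqrt (by nlinarith)
  apply Complex.ext <;>
    simp only [mul_re, mul_im, numP_re, numP_im, conj_re, conj_im, alphaP_re, alphaP_im, add_re,
      add_im, ofReal_re, ofReal_im, I_re, I_im]
  · field_simp
    linear_combination β * √(β ^ 2 - 1) * Real.sin_sq_add_cos_sq θ
  · field_simp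
    linear_combination (-(Real.sin θ * Real.cos θ)) * hs

lemma im_I_mul_alphaP_sub_I_pos (hβ : 1 < β) (hθ : 0 < Real.cos θ) :
    0 < (I * (alphaP β θ - I)).im := by
  rw [I_mul_alphaP_sub_I]
  simpa [cos_ofReal_re] using mul_pos (Real.sqrt_pos.2 (by nlinarith)) hθ

lemma psiP_eq_phiP_sub_pi_div_two (hβ : 1 < β) (hθ : 0 < Real.cos θ) :
    psiP β θ = phiP β θ - π / 2 := by
  rw [psiP, phiP, ← arg_neg_I_mul_of_im_pos (im_I_mul_alphaP_sub_I_pos θ hβ hθ)]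
  congr 1
  linear_combination (alphaP β θ - I) * I_sq

lemma exp_mul_calF (hφ : phiP β θ ≠ π) :
    exp (-I * π / 4) * calF β θ = (2 * (termP β θ).im : ℝ) * I := by
  set E := exp (-I * π / 4)
  set v := (I * (alphaP β θ - I)) ^ (1 / 2 : ℂ)
  have hP : sqrtUp (alphaP β θ - I) = E * v := rfl
  have hM : sqrtUp (alphaM β θ - I) = E * conj v := by
    rw [sqrtUp, I_mul_alphaM_sub_I, conj_cpow _ _ hφ, map_div₀, map_one, map_ofNat]
  have hnum : -I * Real.sin θ - (β : ℂ) * Real.cos θ * ((√(β ^ 2 - 1) : ℝ) : ℂ)⁻¹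
      = -conj (numP β θ) := by
    simp only [numP, map_add, map_mul, map_neg, map_inv₀, conj_I, conj_ofReal]
    ring
  have hF : calF β θ = numP β θ / (alphaP β θ * (E * v))
      - conj (numP β θ) / (conj (alphaP β θ) * (E * conj v)) := by
    rw [calF, hP, hM, hnum, alphaM_eq_neg_conj_alphaP, neg_mul (conj _), neg_div_neg_eq]
    rfl
  rw [← sub_conj, hF, mul_sub, mul_div_mul_mul_cancel₀ (Complex.exp_ne_zero _),
    mul_div_mul_mul_cancel₀ (Complex.exp_ne_zero _), termP, map_div₀, map_mul]

lemma termP_eq (hβ : 1 < β) :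
    termP β θ = (β + (Real.sin θ * Real.cos θ / √(β ^ 2 - 1) : ℝ) * I)
          * (Real.cos (phiP β θ / 2) - Real.sin (phiP β θ / 2) * I)
        / ((β ^ 2 - Real.cos θ ^ 2) * √(β + Real.sin θ) : ℝ) := by
  set c := Real.cos (phiP β θ / 2)
  set s := Real.sin (phiP β θ / 2)
  set u := √(β + Real.sin θ)
  set D := β ^ 2 - Real.cos θ ^ 2
  have hv : (I * (alphaP β θ - I)) ^ (1 / 2 : ℂ) = u * (c + s * I) := by
    rw [cpow_one_half_eq_polar, norm_I_mul_alphaP_sub_I θ hβ.le]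
    rfl
  have hD : 0 < D := by nlinarith [Real.cos_sq_le_one θ]
  have hu : 0 < u := Real.sqrt_pos.2 (by linarith [Real.neg_one_le_sin θ])
  have hα : alphaP β θ ≠ 0 := by
    rw [← normSq_pos, normSq_alphaP θ hβ.le]
    exact hD
  have hα2 : alphaP β θ * conj (alphaP β θ) = D := by
    rw [mul_conj, normSq_alphaP θ hβ.le]
  have hunit : (c : ℂ) ^ 2 + (s : ℂ) ^ 2 = 1 := by
    exact_mod_cast Real.cos_sq_add_sin_sq (phiP β θ / 2)
  have hcs : (c : ℂ) + s * I ≠ 0 := by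
    intro h
    obtain ⟨hc, hs⟩ : c = 0 ∧ s = 0 := by simpa using Complex.ext_iff.1 h
    simp [hc, hs] at hunit
  rw [termP, hv, div_eq_div_iff (mul_ne_zero hα (mul_ne_zero (by exact_mod_cast hu.ne') hcs))
    (by exact_mod_cast (mul_pos hD hu).ne'), ← numP_mul_conj_alphaP θ hβ]
  push_cast
  linear_combination (-(numP β θ * u * (c + s * I) * (c - s * I))) * hα2
    - (numP β θ * D * u) * hunit + (numP β θ * D * u * s ^ 2) * I_sq

lemma calG_eq (hβ : 1 < β) (hθ : 0 < Real.cos θ) :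
    calG β θ = √2 * (β * Real.sin (phiP β θ / 2)
        - Real.cos θ * Real.sin θ * (√(β ^ 2 - 1))⁻¹ * Real.cos (phiP β θ / 2))
      / ((β ^ 2 - Real.cos θ ^ 2) * √(β + Real.sin θ)) := by
  rw [calG, psiP_eq_phiP_sub_pi_div_two θ hβ hθ,
    show (phiP β θ - π / 2) / 2 = phiP β θ / 2 - π / 4 by ring, cos_add_sin_sub_pi_div_four,
    cos_sub_sin_sub_pi_div_four]
  ring

lemma sqrt_two_mul_calG (hβ : 1 < β) (hθ : 0 < Real.cos θ) :
    √2 * calG β θ = -(2 * (termP β θ).im) := by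
  rw [termP_eq θ hβ, div_ofReal_im, calG_eq θ hβ hθ, ← mul_div_assoc, ← mul_assoc,
    Real.mul_self_sqrt zero_le_two]
  simp only [mul_im, mul_re, add_re, add_im, sub_re, sub_im, ofReal_re, ofReal_im, I_re, I_im]
  ring

end Alpha

/-- For θ ∈ (-π/2, π/2) and β > 1,
e^{-iπ/4} ℱ(β,θ) = -i√2 𝒢(β,θ); in particular e^{-iπ/4} ℱ(β,θ) is purely
imaginary (its real part vanishes). -/
theorem stmt_3 (θ β : ℝ) (hθ : θ ∈ Set.Ioo (-(Real.pi / 2)) (Real.pi / 2))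
    (hβ : 1 < β) :
    Complex.exp (-Complex.I * Real.pi / 4) * calF β θ
      = -Complex.I * Real.sqrt 2 * (calG β θ : ℂ) ∧
    (Complex.exp (-Complex.I * Real.pi / 4) * calF β θ).re = 0 := by
  have hc : 0 < Real.cos θ := Real.cos_pos_of_mem_Ioo hθ
  have hφ : phiP β θ ≠ π :=
    (arg_lt_pi_iff.2 (Or.inr (im_I_mul_alphaP_sub_I_pos θ hβ hc).ne')).ne
  have key : exp (-I * π / 4) * calF β θ = -I * √2 * calG β θ := by
    rw [exp_mul_calF θ hφ, mul_assoc, ← ofReal_mul, sqrt_two_mul_calG θ hβ hc]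
    push_cast
    ring
  exact ⟨key, by rw [key]; simp⟩
end
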